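/- arXiv:hep-th/9507128 — 3 statements merged into one kernel-verified Lean document; each statement's English description precedes it below -/
import Mathlib

section
/- In the Hecke algebra H_n(q), the Murphy operators L_p = Σ_{k=1}^{p-1} q^{-(p-1-k)} g_k g_{k+1} ⋯ g_{p-2} g_{p-1} g_{p-2} ⋯ g_{k+1} g_k (p = 2,...,n) pairwise commute: L_p L_r = L_r L_p for all p, r. -/
/-! The Murphy operators `L = murphy q g` satisfy `L (m + 1) = g m + q⁻¹ • (g m * L m * g m)`.
From this recursion, `g i` commutes with `L r` whenever `i + 2 ≤ r`: for `i + 2 < r` by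
induction on `r`, and for `i + 2 = r` because, with `s = g i`, `t = g (i + 1)` and `K = L i`
(which commutes with `t`), `s` commutes with `q • t + t * s * t` by the quadratic and braid
relations, and with `t * s * K * s * t` by the braid relation alone. As `L p` is a combination
of words in `g 1, …, g (p - 1)`, it follows that `L p` commutes with `L r` for `p < r`. -/

/-- The Murphy operator
`L_p = Σ_{k=1}^{p-1} q^{-(p-1-k)} g_k g_{k+1} ⋯ g_{p-2} g_{p-1} g_{p-2} ⋯ g_{k+1} g_k`
in the Hecke algebra generated by the `g i`. -/
noncomputable def murphy {A : Type*} [Ring A] [Algebra ℂ A] (q : ℂ) (g : ℕ → A)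
    (p : ℕ) : A :=
  ∑ k ∈ Finset.Ico 1 p, (q ^ (p - 1 - k))⁻¹ •
    (((List.range' k (p - k)).map g).prod *
      (((List.range' k (p - 1 - k)).reverse.map g).prod))

section HeckeStep

variable {𝕜 A : Type*} [Field 𝕜] [Ring A] [Algebra 𝕜 A]

def murphyStep (q : 𝕜) (s x : A) : A := s + q⁻¹ • (s * x * s)

theorem Commute.murphyStep {q : 𝕜} {x s y : A} (hs : Commute x s) (hy : Commute x y) :
    Commute x (murphyStep q s y) :=
  hs.add_right (((hs.mul_right hy).mul_right hs).smul_right _)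

theorem commute_smul_add_mul_mul {q : 𝕜} {s t : A} (hs : s ^ 2 = (q - 1) • s + q • (1 : A))
    (hst : s * t * s = t * s * t) : Commute s (q • t + t * s * t) := by
  have hl : s * (t * s * t) = (q - 1) • (s * t * s) + q • (t * s) := by
    rw [← hst, ← mul_assoc, ← mul_assoc, ← sq, hs]
    simp only [add_mul, smul_mul_assoc, one_mul]
  have hr : t * s * t * s = (q - 1) • (s * t * s) + q • (s * t) := by
    rw [← hst, mul_assoc, ← sq, hs]
    simp only [mul_add, mul_smul_comm, mul_one]
  show s * (q • t + t * s * t) = (q • t + t * s * t) * s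
  rw [mul_add, add_mul, mul_smul_comm, smul_mul_assoc, hl, hr]
  abel

theorem commute_braid_conj {s t K : A} (hst : s * t * s = t * s * t) (hK : Commute t K) :
    Commute s (t * s * K * s * t) :=
  calc s * (t * s * K * s * t) = s * t * s * K * s * t := by simp only [mul_assoc]
    _ = t * s * (t * K) * s * t := by rw [hst]; simp only [mul_assoc]
    _ = t * s * K * (t * s * t) := by rw [hK.eq]; simp only [mul_assoc]
    _ = t * s * K * s * t * s := by rw [← hst]; simp only [mul_assoc]

theorem commute_murphyStep_murphyStep {q : 𝕜} (hq : q ≠ 0) {s t K : A}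
    (hs : s ^ 2 = (q - 1) • s + q • (1 : A)) (hst : s * t * s = t * s * t) (hK : Commute t K) :
    Commute s (murphyStep q t (murphyStep q s K)) := by
  have h : murphyStep q t (murphyStep q s K) =
      q⁻¹ • (q • t + t * s * t) + (q⁻¹ * q⁻¹) • (t * s * K * s * t) := by
    simp only [murphyStep, mul_add, add_mul, mul_smul_comm, smul_mul_assoc, smul_add, smul_smul,
      inv_mul_cancel₀ hq, one_smul, mul_assoc, add_assoc]
  rw [h]
  exact ((commute_smul_add_mul_mul hs hst).smul_right _).add_right
    ((commute_braid_conj hst hK).smul_right _)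

end HeckeStep

section MurphyTerm

variable {A : Type*} [Monoid A]

def murphyTerm (g : ℕ → A) (k p : ℕ) : A :=
  ((List.range' k (p - k)).map g).prod * ((List.range' k (p - 1 - k)).reverse.map g).prod

theorem murphyTerm_self_add_one (g : ℕ → A) (m : ℕ) : murphyTerm g m (m + 1) = g m := by
  simp [murphyTerm]

theorem conj_murphyTerm (g : ℕ → A) (k e : ℕ)
    (hbr : g (k + e) * g (k + e + 1) * g (k + e) = g (k + e + 1) * g (k + e) * g (k + e + 1))
    (hcm : ∀ i, k ≤ i → i < k + e → Commute (g i) (g (k + e + 1))) :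
    g (k + e + 1) * murphyTerm g k (k + e + 1) * g (k + e + 1) = murphyTerm g k (k + e + 2) := by
  set W := ((List.range' k e).map g).prod
  set W' := ((List.range' k e).reverse.map g).prod
  have hW : Commute (g (k + e + 1)) W := by
    refine Commute.list_prod_right _ _ ?_
    simp only [List.mem_map, List.mem_range'_1]
    rintro _ ⟨i, hi, rfl⟩
    exact (hcm i hi.1 hi.2).symm
  have hW' : Commute (g (k + e + 1)) W' := by
    refine Commute.list_prod_right _ _ ?_
    simp only [List.mem_map, List.mem_reverse, List.mem_range'_1]
    rintro _ ⟨i, hi, rfl⟩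
    exact (hcm i hi.1 hi.2).symm
  have hm : murphyTerm g k (k + e + 1) = W * g (k + e) * W' := by
    rw [murphyTerm, show k + e + 1 - k = e + 1 by omega, show k + e + 1 - 1 - k = e by omega]
    simp [List.range'_concat, W, W', mul_assoc]
  have hm' : murphyTerm g k (k + e + 2) = W * g (k + e) * g (k + e + 1) * g (k + e) * W' := by
    rw [murphyTerm, show k + e + 2 - k = e + 1 + 1 by omega,
      show k + e + 2 - 1 - k = e + 1 by omega]
    simp [List.range'_concat, W, W', mul_assoc, add_assoc]
  rw [hm, hm']
  calc g (k + e + 1) * (W * g (k + e) * W') * g (k + e + 1)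
      = W * (g (k + e + 1) * g (k + e) * g (k + e + 1)) * W' := by
        rw [← mul_assoc, ← mul_assoc, hW.eq, mul_assoc _ W', ← hW'.eq]; simp only [mul_assoc]
    _ = W * g (k + e) * g (k + e + 1) * g (k + e) * W' := by rw [← hbr]; simp only [mul_assoc]

end MurphyTerm

section Murphy

variable {A : Type*} [Ring A] [Algebra ℂ A]

theorem murphy_eq_sum_murphyTerm (q : ℂ) (g : ℕ → A) (p : ℕ) :
    murphy q g p = ∑ k ∈ Finset.Ico 1 p, (q ^ (p - 1 - k))⁻¹ • murphyTerm g k p :=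
  rfl

theorem commute_murphy_of_forall {q : ℂ} {g : ℕ → A} {p : ℕ} {x : A}
    (h : ∀ i, 1 ≤ i → i < p → Commute x (g i)) : Commute x (murphy q g p) := by
  refine Commute.sum_right _ _ _ fun k hk => ((Commute.mul_right ?_ ?_).smul_right _)
  all_goals
    refine Commute.list_prod_right _ _ ?_
    simp only [List.mem_map, List.mem_reverse, List.mem_range'_1, Finset.mem_Ico] at hk ⊢
    rintro _ ⟨i, hi, rfl⟩
    exact h i (by omega) (by omega)

theorem murphy_succ (q : ℂ) (g : ℕ → A) (n m : ℕ) (hm : 1 ≤ m) (hmn : m + 1 ≤ n)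
    (hbr : ∀ i, 1 ≤ i → i + 1 ≤ n - 1 →
      g i * g (i + 1) * g i = g (i + 1) * g i * g (i + 1))
    (hcm : ∀ i j, 1 ≤ i → j ≤ n - 1 → i + 2 ≤ j → g i * g j = g j * g i) :
    murphy q g (m + 1) = murphyStep q (g m) (murphy q g m) := by
  rw [murphy_eq_sum_murphyTerm, murphy_eq_sum_murphyTerm, Finset.sum_Ico_succ_top hm,
    murphyTerm_self_add_one, Nat.add_sub_cancel, Nat.sub_self, pow_zero, inv_one, one_smul,
    add_comm, murphyStep, Finset.mul_sum, Finset.sum_mul, Finset.smul_sum]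
  congr 1
  refine Finset.sum_congr rfl fun k hk => ?_
  obtain ⟨e, rfl⟩ : ∃ e, m = k + e + 1 := ⟨m - k - 1, by simp at hk; omega⟩
  have hk : 1 ≤ k := (Finset.mem_Ico.1 hk).1
  rw [mul_smul_comm, smul_mul_assoc, smul_smul,
    conj_murphyTerm g k e (hbr _ (by omega) (by omega))
      fun i hi hie => hcm i _ (by omega) (by omega) (by omega),
    show k + e + 1 - k = e + 1 by omega, show k + e + 1 - 1 - k = e by omega, pow_succ,
    mul_inv_rev]

theorem commute_murphy_of_add_two_le (n : ℕ) (q : ℂ) (hq : q ≠ 0) (g : ℕ → A)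
    (hsq : ∀ i, 1 ≤ i → i ≤ n - 1 → g i ^ 2 = (q - 1) • g i + q • (1 : A))
    (hbr : ∀ i, 1 ≤ i → i + 1 ≤ n - 1 →
      g i * g (i + 1) * g i = g (i + 1) * g i * g (i + 1))
    (hcm : ∀ i j, 1 ≤ i → j ≤ n - 1 → i + 2 ≤ j → g i * g j = g j * g i) :
    ∀ r ≤ n, ∀ i, 1 ≤ i → i + 2 ≤ r → Commute (g i) (murphy q g r) := by
  intro r
  induction r with
  | zero => intro _ i _ hi; omega
  | succ r ih =>
    intro hrn i hi hir
    rw [murphy_succ q g n r (by omega) hrn hbr hcm]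
    obtain hir | rfl : i + 2 ≤ r ∨ r = i + 1 := by omega
    · exact Commute.murphyStep (hcm i r hi (by omega) hir) (ih (by omega) i hi hir)
    · rw [murphy_succ q g n i hi (by omega) hbr hcm]
      refine commute_murphyStep_murphyStep hq (hsq i hi (by omega)) (hbr i hi (by omega)) ?_
      exact commute_murphy_of_forall fun j hj hji => (hcm j _ hj (by omega) (by omega)).symm

end Murphy

/-- In the Hecke algebra `H_n(q)`, the Murphy operators pairwise commute. -/
theorem stmt8 {A : Type*} [Ring A] [Algebra ℂ A] (n : ℕ) (q : ℂ) (hq : q ≠ 0)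
    (g : ℕ → A)
    (hsq : ∀ i, 1 ≤ i → i ≤ n - 1 → g i ^ 2 = (q - 1) • g i + q • (1 : A))
    (hbr : ∀ i, 1 ≤ i → i + 1 ≤ n - 1 →
      g i * g (i + 1) * g i = g (i + 1) * g i * g (i + 1))
    (hcm : ∀ i j, 1 ≤ i → j ≤ n - 1 → i + 2 ≤ j → g i * g j = g j * g i) :
    ∀ p r, 2 ≤ p → p ≤ n → 2 ≤ r → r ≤ n →
      murphy q g p * murphy q g r = murphy q g r * murphy q g p := by
  have hlt : ∀ p r, p < r → r ≤ n → Commute (murphy q g p) (murphy q g r) := fun p r hpr hrn =>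
    (commute_murphy_of_forall fun i hi hip =>
      (commute_murphy_of_add_two_le n q hq g hsq hbr hcm r hrn i hi (by omega)).symm).symm
  intro p r _ hpn _ hrn
  obtain hpr | rfl | hrp := lt_trichotomy p r
  · exact (hlt p r hpr hrn).eq
  · rfl
  · exact (hlt r p hrp hpn).eq.symm
end

section
/- In the Temperley-Lieb algebra TL_4(q), the element Q_mr = e_1 e_3 e_2 (δ - e_1)(δ - e_3), where δ = q^{1/2}+q^{-1/2}, is nilpotent of order two: Q_mr^2 = 0. -/
/-- In the Temperley-Lieb algebra `TL₄(q)`, the element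
`Q_mr = e₁e₃e₂(δ - e₁)(δ - e₃)` with `δ = q^{1/2}+q^{-1/2}` is nilpotent of
order two: `Q_mr² = 0`. -/
theorem stmt16 {A : Type*} [Ring A] [Algebra ℂ A] (q : ℝ) (hq : 0 < q)
    (e1 e2 e3 : A)
    (d : ℂ) (hd : d = ((Real.sqrt q + (Real.sqrt q)⁻¹ : ℝ) : ℂ))
    (h1 : e1 * e1 = d • e1) (h2 : e2 * e2 = d • e2) (h3 : e3 * e3 = d • e3)
    (h13 : e1 * e3 = e3 * e1)
    (h121 : e1 * e2 * e1 = e1) (h212 : e2 * e1 * e2 = e2)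
    (h232 : e2 * e3 * e2 = e2) (h323 : e3 * e2 * e3 = e3) :
    (e1 * e3 * e2 * (d • (1 : A) - e1) * (d • (1 : A) - e3)) *
      (e1 * e3 * e2 * (d • (1 : A) - e1) * (d • (1 : A) - e3)) = 0 := by
  have k1 : (d • (1:A) - e1) * e1 = 0 := by
    rw [sub_mul, smul_mul_assoc, one_mul, h1, sub_self]
  have k3 : (d • (1:A) - e3) * e3 = 0 := by
    rw [sub_mul, smul_mul_assoc, one_mul, h3, sub_self]
  have c13 : (d • (1:A) - e3) * e1 = e1 * (d • (1:A) - e3) := by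
    rw [sub_mul, mul_sub, h13]
    simp [mul_smul_comm, smul_mul_assoc]
  have key : (d • (1:A) - e1) * ((d • (1:A) - e3) * (e1 * e3)) = 0 := by
    calc (d • (1:A) - e1) * ((d • (1:A) - e3) * (e1 * e3))
        = ((d • (1:A) - e1) * e1) * ((d • (1:A) - e3) * e3) := by
          rw [← mul_assoc (d • (1:A) - e3) e1 e3, c13]
          noncomm_ring
      _ = 0 := by rw [k1, zero_mul]
  calc (e1 * e3 * e2 * (d • (1 : A) - e1) * (d • (1 : A) - e3)) *
      (e1 * e3 * e2 * (d • (1 : A) - e1) * (d • (1 : A) - e3))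
      = e1 * e3 * e2 * ((d • (1:A) - e1) * ((d • (1:A) - e3) * (e1 * e3))) *
        (e2 * (d • (1 : A) - e1) * (d • (1 : A) - e3)) := by noncomm_ring
    _ = 0 := by rw [key]; simp
end

section
/- In the quotient of H_3(q) by the ideal generated by e_1 e_2 e_1 - e_1 (where e_j = q^{-1/2}(g_j+1)), the image of the symmetrizer C_3 = (1/[3]_q!)·Σ_{w ∈ S_3} g_w is zero. -/
/-! Since `g₁² = (q - 1) g₁ + q`, expanding `(g₁ + 1)(g₂ + 1)(g₁ + 1)` gives `Σ_w g_w + q (g₁ + 1)`.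
Hence `Σ_w g_w = q^{3/2} (e₁e₂e₁ - e₁)`, which vanishes in the Temperley-Lieb quotient. -/

noncomputable section

/-- The defining relations of the Hecke algebra `H₃(q)` on the free algebra on
two generators `g₁ = ι 0`, `g₂ = ι 1`. -/
inductive HeckeRel3 (q : ℝ) :
    FreeAlgebra ℂ (Fin 2) → FreeAlgebra ℂ (Fin 2) → Prop
  | sq (i : Fin 2) : HeckeRel3 q (FreeAlgebra.ι ℂ i * FreeAlgebra.ι ℂ i)
      (((q : ℂ) - 1) • FreeAlgebra.ι ℂ i + (q : ℂ) • 1)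
  | braid : HeckeRel3 q
      (FreeAlgebra.ι ℂ 0 * FreeAlgebra.ι ℂ 1 * FreeAlgebra.ι ℂ 0)
      (FreeAlgebra.ι ℂ 1 * FreeAlgebra.ι ℂ 0 * FreeAlgebra.ι ℂ 1)

/-- The Hecke algebra `H₃(q)`. -/
abbrev H3 (q : ℝ) := RingQuot (HeckeRel3 q)

/-- The generators `g₁, g₂` of `H₃(q)`. -/
def G (q : ℝ) (i : Fin 2) : H3 q :=
  RingQuot.mkAlgHom ℂ (HeckeRel3 q) (FreeAlgebra.ι ℂ i)

/-- The Temperley-Lieb generators `e_j = q^{-1/2}(g_j + 1)` of `H₃(q)`. -/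
def E (q : ℝ) (i : Fin 2) : H3 q := ((Real.sqrt q : ℂ))⁻¹ • (G q i + 1)

/-- The Temperley-Lieb relation `e₁e₂e₁ = e₁` imposed on `H₃(q)`; the quotient
`RingQuot (TLRel3 q)` is `H₃(q)` modulo the two-sided ideal generated by
`e₁e₂e₁ - e₁`. -/
inductive TLRel3 (q : ℝ) : H3 q → H3 q → Prop
  | rel : TLRel3 q (E q 0 * E q 1 * E q 0) (E q 0)

/-- The symmetrizer `C₃ = (1/[3]_q!) Σ_{w ∈ S₃} g_w`. -/
def C3 (q : ℝ) : H3 q :=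
  ((((1 + q) * (1 + q + q ^ 2) : ℝ) : ℂ))⁻¹ •
    (1 + G q 0 + G q 1 + G q 0 * G q 1 + G q 1 * G q 0 + G q 0 * G q 1 * G q 0)


theorem sum_eq_mul_mul_sub_smul {R A : Type*} [CommRing R] [Ring A] [Algebra R A]
    (r : R) {g h : A} (hg : g * g = (r - 1) • g + r • 1) :
    1 + g + h + g * h + h * g + g * h * g = (g + 1) * (h + 1) * (g + 1) - r • (g + 1) := by
  have expand : (g + 1) * (h + 1) * (g + 1) = g * h * g + g * h + g * g + g + h * g + h + g + 1 := by
    noncomm_ring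
  rw [expand, hg]
  module

namespace H3

theorem G_mul_self (q : ℝ) (i : Fin 2) :
    G q i * G q i = ((q : ℂ) - 1) • G q i + (q : ℂ) • 1 := by
  simpa only [G, map_mul, map_add, map_smul, map_one] using
    RingQuot.mkAlgHom_rel ℂ (HeckeRel3.sq (q := q) i)

theorem sqrt_pow_three_smul_E_sub {q : ℝ} (hq : 0 < q) :
    (Real.sqrt q : ℂ) ^ 3 • (E q 0 * E q 1 * E q 0 - E q 0) =
      1 + G q 0 + G q 1 + G q 0 * G q 1 + G q 1 * G q 0 + G q 0 * G q 1 * G q 0 := by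
  have hs : (Real.sqrt q : ℂ) ≠ 0 := by exact_mod_cast (Real.sqrt_pos.mpr hq).ne'
  have hs2 : (Real.sqrt q : ℂ) ^ 2 = q := by exact_mod_cast Real.sq_sqrt hq.le
  rw [sum_eq_mul_mul_sub_smul (q : ℂ) (G_mul_self q 0), E, E, smul_sub, smul_mul_smul_comm,
    smul_mul_smul_comm, ← hs2]
  congr 1 <;> match_scalars <;> field_simp

end H3

/-- In the Temperley-Lieb quotient `H₃(q)/⟨e₁e₂e₁ - e₁⟩`, the image of the
symmetrizer `C₃` is zero. -/
theorem stmt19 (q : ℝ) (hq : 0 < q) :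
    RingQuot.mkAlgHom ℂ (TLRel3 q) (C3 q) = 0 := by
  have hTL : RingQuot.mkAlgHom ℂ (TLRel3 q) (E q 0 * E q 1 * E q 0 - E q 0) = 0 := by
    rw [map_sub, RingQuot.mkAlgHom_rel ℂ TLRel3.rel, sub_self]
  rw [C3, ← H3.sqrt_pow_three_smul_E_sub hq, map_smul, map_smul, hTL, smul_zero, smul_zero]

end
end
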